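/- arXiv:2505.06094 — 3 statements merged into one kernel-verified Lean document; each statement's English description precedes it below -/
import Mathlib

section
/- Let u_n be defined by u_1 = 1, u_2 = 2, and u_n = (1/2)·∑_{k=1}^{n−1} C(n,k)·u_k·u_{n−k} for n ≥ 3 (equivalently 2u_n = ∑_{k=1}^{n-1} binom(n,k) u_k u_{n-k} for n ≥ 3). Then the exponential generating function ∑_{n≥1} u_n x^n/n! equals 1 − √(1 − 2x − x²) as formal power series. -/
/-! The coefficient of `xⁿ/n!` in `F²` is the binomial convolution `∑ₖ C(n,k) u_k u_{n-k}`.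
Since `u₀ = 0`, the recursion says this equals `2uₙ` for `n ≥ 3`; at `n = 1, 2` it falls short
of `2uₙ` by `2 = 1! · 2` and `2 = 2! · 1`, the coefficients of `2x + x²`. -/

open PowerSeries Finset

theorem coeff_mk_div_factorial_mul {K : Type*} [Field K] [CharZero K] (a b : ℕ → K) (n : ℕ) :
    coeff n (mk (fun n => a n / n.factorial) * mk (fun n => b n / n.factorial)) =
      (∑ k ∈ range (n + 1), (n.choose k : K) * a k * b (n - k)) / n.factorial := by
  rw [coeff_mul, Nat.sum_antidiagonal_eq_sum_range_succ_mk, sum_div]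
  refine sum_congr rfl fun k hk => ?_
  have hkn : k ≤ n := Nat.lt_succ_iff.mp (mem_range.mp hk)
  have hchoose : (n.choose k : K) * k.factorial * (n - k).factorial = n.factorial := by
    exact_mod_cast Nat.choose_mul_factorial_mul_factorial hkn
  have hchoose_ne : (n.choose k : K) ≠ 0 := by exact_mod_cast (Nat.choose_pos hkn).ne'
  rw [coeff_mk, coeff_mk, ← hchoose]
  field_simp

theorem sum_range_succ_eq_add_sum_Ioo_add {M : Type*} [AddCommMonoid M] (f : ℕ → M) {n : ℕ}
    (hn : 0 < n) : ∑ k ∈ range (n + 1), f k = f 0 + ∑ k ∈ Ioo 0 n, f k + f n := by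
  rw [sum_range_succ, range_eq_Ico, Ico_eq_cons_Ioo hn, sum_cons]

theorem binomial_convolution_self_eq (u : ℕ → ℚ) (h0 : u 0 = 0) (h1 : u 1 = 1) (h2 : u 2 = 2)
    (hrec : ∀ n, 3 ≤ n → 2 * u n = ∑ k ∈ Ioo 0 n, (n.choose k : ℚ) * u k * u (n - k)) (n : ℕ) :
    ∑ k ∈ range (n + 1), (n.choose k : ℚ) * u k * u (n - k) =
      2 * u n - (if n = 1 then 2 else 0) - (if n = 2 then 2 else 0) := by
  match n with
  | 0 => simp [h0]
  | 1 => simp [sum_range_succ, h0, h1]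
  | 2 => norm_num [sum_range_succ, h0, h1, h2]
  | n + 3 =>
    rw [sum_range_succ_eq_add_sum_Ioo_add _ (by omega), ← hrec _ (by omega)]
    simp [h0]

/-- let `u₁ = 1`, `u₂ = 2` and `2 uₙ = ∑_{k=1}^{n−1} C(n,k) u_k u_{n−k}`
for `n ≥ 3` (and `u₀ = 0`).  Then the exponential generating function
`F = ∑_{n≥1} uₙ xⁿ/n!` equals `1 − √(1 − 2x − x²)` as a formal power series, i.e. `F`
is the power series with zero constant term satisfying `F² − 2F + 2x + x² = 0`. -/
theorem stmt_11 (u : ℕ → ℚ) (h0 : u 0 = 0) (h1 : u 1 = 1) (h2 : u 2 = 2)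
    (hrec : ∀ n, 3 ≤ n →
      2 * u n = ∑ k ∈ Finset.Ioo 0 n, (n.choose k : ℚ) * u k * u (n - k)) :
    (PowerSeries.mk fun n => u n / n.factorial) ^ 2
        - 2 * (PowerSeries.mk fun n => u n / n.factorial)
        + (2 * PowerSeries.X + PowerSeries.X ^ 2) = (0 : PowerSeries ℚ) := by
  ext n
  rw [sq, map_add, map_sub, coeff_mk_div_factorial_mul,
    binomial_convolution_self_eq u h0 h1 h2 hrec]
  simp only [two_mul, map_add, coeff_mk, coeff_X, coeff_X_pow, map_zero]
  split_ifs <;> subst_vars <;> first | omega | ring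
end

section
/- Let f: P → Q be a monotone map of finite posets and let y ∈ Q. Suppose strict chains in P map to strict chains under f only when f is strictly increasing on them; consider the pullback on chains defined by f*[y_0 < ⋯ < y_n] = ∑ over all strict chains x_0 < ⋯ < x_n in P with f(x_i) = y_i. Then for a strict chain γ in Q through y at position m (y_m = y), pulling back γ and then splitting each resulting chain of P at its element above y agrees with first splitting γ at y, pulling back the two halves to P_{≤x} and P_{≥x} for each x ∈ f^{-1}(y), and concatenating: i.e., the concatenation of pullbacks equals the pullback of the concatenation, summed over x ∈ f^{-1}({y}). -/
/-!
Write a chain through position `m` as `a ++ x :: t` with `a.length = m`. Being a chain, and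
mapping onto `γ`, are conditions that split into the same conditions on the two overlapping
pieces `a ++ [x]` and `x :: t`; conversely a triple `(x, a ++ [x], x :: t)` is determined by
its concatenation once the length `m + 1` of its first piece is fixed.
-/

namespace List

variable {α : Type*}

theorem eq_take_append_getElem_cons_drop (l : List α) {m : ℕ} (h : m < l.length) :
    l = l.take m ++ l[m] :: l.drop (m + 1) := by
  rw [getElem_cons_drop, take_append_drop]

theorem eq_of_append_cons_eq_append_cons {a a' t t' : List α} {x x' : α}
    (h : a ++ x :: t = a' ++ x' :: t') (hlen : a.length = a'.length) :
    a = a' ∧ x = x' ∧ t = t' := by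
  obtain ⟨rfl, hxt⟩ := append_inj h hlen
  exact ⟨rfl, cons_eq_cons.mp hxt⟩

theorem eq_iff_take_add_one_eq_and_drop_eq {l l' : List α} (m : ℕ) :
    l = l' ↔ l.take (m + 1) = l'.take (m + 1) ∧ l.drop m = l'.drop m := by
  refine ⟨by rintro rfl; exact ⟨rfl, rfl⟩, fun ⟨htake, hdrop⟩ => ?_⟩
  have key : ∀ k : List α, k = (k.take (m + 1)).take m ++ k.drop m := fun k => by
    rw [take_take, Nat.min_eq_left m.le_succ, take_append_drop]
  rw [key l, key l', htake, hdrop]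

theorem take_length_add_one_append_cons (a t : List α) (x : α) :
    (a ++ x :: t).take (a.length + 1) = a ++ [x] := by
  simp [take_append]

theorem drop_length_append_cons (a t : List α) (x : α) :
    (a ++ x :: t).drop a.length = x :: t :=
  drop_left

theorem IsChain.le_of_mem_append_singleton [Preorder α] {a : List α} {x z : α}
    (h : (a ++ [x]).IsChain (· < ·)) (hz : z ∈ a ++ [x]) : z ≤ x := by
  rcases mem_append.mp hz with hz | hz
  · have hpw := pairwise_append.mp (isChain_iff_pairwise.mp h)
    exact (hpw.2.2 z hz x (mem_singleton_self x)).le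
  · exact (mem_singleton.mp hz).le

theorem IsChain.le_of_mem_cons [Preorder α] {t : List α} {x z : α}
    (h : (x :: t).IsChain (· < ·)) (hz : z ∈ x :: t) : x ≤ z := by
  rcases mem_cons.mp hz with rfl | hz
  · exact le_rfl
  · exact (h.rel_cons hz).le

theorem map_append_cons_eq_iff {β : Type*} {f : α → β} {a t : List α} {x : α} {γ : List β} :
    (a ++ x :: t).map f = γ ↔
      (a ++ [x]).map f = γ.take (a.length + 1) ∧ (x :: t).map f = γ.drop a.length := by
  rw [eq_iff_take_add_one_eq_and_drop_eq a.length, ← map_take, ← map_drop,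
    take_length_add_one_append_cons, drop_length_append_cons]

end List

theorem stmt_16_general {P Q : Type*} [PartialOrder P]
    (f : P → Q) (y : Q) (γ : List Q) (m : ℕ)
    (hm : γ[m]? = some y) :
    ∀ c : List P,
      (c.Chain' (· < ·) ∧ c.map f = γ) ↔
      ∃! t : P × List P × List P,
        f t.1 = y ∧
        t.2.1.Chain' (· < ·) ∧ t.2.2.Chain' (· < ·) ∧
        t.2.1.map f = γ.take (m + 1) ∧ t.2.2.map f = γ.drop m ∧
        t.2.1.getLast? = some t.1 ∧ t.2.2.head? = some t.1 ∧
        (∀ z ∈ t.2.1, z ≤ t.1) ∧ (∀ z ∈ t.2.2, t.1 ≤ z) ∧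
        c = t.2.1 ++ t.2.2.tail := by
  have hmγ : m < γ.length := (List.getElem?_eq_some_iff.mp hm).1
  have length_eq {a : List P} {x : P} (h : (a ++ [x]).map f = γ.take (m + 1)) : a.length = m := by
    simpa [hmγ] using congrArg List.length h
  intro c
  unfold List.Chain'
  constructor
  · rintro ⟨hc, hcγ⟩
    obtain ⟨a, x, t, rfl, rfl⟩ : ∃ a x t, c = a ++ x :: t ∧ a.length = m := by
      have hmc : m < c.length := by simpa [← hcγ] using hmγ
      exact ⟨_, _, _, c.eq_take_append_getElem_cons_drop hmc, by simp; omega⟩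
    rw [List.map_append_cons_eq_iff] at hcγ
    rw [List.isChain_split] at hc
    refine ⟨(x, a ++ [x], x :: t), ⟨?_, hc.1, hc.2, hcγ.1, hcγ.2, by simp, rfl,
      fun _ => hc.1.le_of_mem_append_singleton, fun _ => hc.2.le_of_mem_cons, by simp⟩, ?_⟩
    · simpa [List.head?_drop, hm] using congrArg List.head? hcγ.2
    · rintro ⟨x', c₁, c₂⟩ h
      dsimp only at h
      obtain ⟨-, -, -, hγ₁, -, hlast, hhead, -, -, hcat⟩ := h
      obtain ⟨a', rfl⟩ := List.getLast?_eq_some_iff.mp hlast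
      obtain ⟨t', rfl⟩ := List.head?_eq_some_iff.mp hhead
      obtain ⟨rfl, rfl, rfl⟩ :=
        List.eq_of_append_cons_eq_append_cons (by simpa using hcat.symm) (length_eq hγ₁)
      rfl
  · rintro ⟨⟨x, c₁, c₂⟩, h, -⟩
    dsimp only at h
    obtain ⟨-, h₁, h₂, hγ₁, hγ₂, hlast, hhead, -, -, rfl⟩ := h
    obtain ⟨a, rfl⟩ := List.getLast?_eq_some_iff.mp hlast
    obtain ⟨t, rfl⟩ := List.head?_eq_some_iff.mp hhead
    obtain rfl := length_eq hγ₁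
    rw [List.tail_cons, List.append_assoc, List.singleton_append]
    exact ⟨List.isChain_split.mpr ⟨h₁, h₂⟩, List.map_append_cons_eq_iff.mpr ⟨hγ₁, hγ₂⟩⟩

/-- compatibility of the chain-level pullback with concatenation.
Let `f : P → Q` be a monotone map of finite posets, `y ∈ Q`, and let `γ` be a strict
chain in `Q` (a list with `List.Chain' (· < ·)`) with `γ_m = y`.  The pullback of a chain
is the formal sum of all strict chains mapping to it pointwise; the identity of formal
sums `f^* ∘ μ_y = (⊕_{x ∈ f^{-1}(y)} μ_x) ∘ (⊕_x f_{≤x}^* ⊗ f_{≥x}^*)` is expressed as: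
a strict chain `c` in `P` maps pointwise to `γ` if and only if there is a unique triple
`(x, c₁, c₂)` with `f x = y`, `c₁` a strict chain in `P_{≤x}` ending at `x` mapping to
`γ.take (m+1)`, `c₂` a strict chain in `P_{≥x}` starting at `x` mapping to `γ.drop m`,
whose concatenation is `c`. -/
theorem stmt_16 {P Q : Type*} [PartialOrder P] [PartialOrder Q] [Fintype P] [Fintype Q]
    (f : P → Q) (hf : Monotone f) (y : Q) (γ : List Q) (m : ℕ)
    (hγ : γ.Chain' (· < ·)) (hm : γ[m]? = some y) :
    ∀ c : List P,
      (c.Chain' (· < ·) ∧ c.map f = γ) ↔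
      ∃! t : P × List P × List P,
        f t.1 = y ∧
        t.2.1.Chain' (· < ·) ∧ t.2.2.Chain' (· < ·) ∧
        t.2.1.map f = γ.take (m + 1) ∧ t.2.2.map f = γ.drop m ∧
        t.2.1.getLast? = some t.1 ∧ t.2.2.head? = some t.1 ∧
        (∀ z ∈ t.2.1, z ≤ t.1) ∧ (∀ z ∈ t.2.2, t.1 ≤ z) ∧
        c = t.2.1 ++ t.2.2.tail :=
  stmt_16_general f y γ m hm
end

section
/- For n ≥ 1, the maximal intervals of the poset MLT(n) of multilabeled trees on {1,…,n} are in bijection with labeled trees on {1,…,n}, and the maximal interval corresponding to a labeled tree t is isomorphic as a poset to the Boolean lattice of subsets of the edge set E(t) of t (which has n−1 elements). -/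
/-- A multilabeled tree on `{1,…,n}`: a tree whose vertex set is a set partition of
`Fin n`, i.e. a partition `π` together with a tree structure on the set of blocks
`Quotient π`. -/
structure MLT (n : ℕ) where
  π : Setoid (Fin n)
  G : SimpleGraph (Quotient π)
  tree : G.IsTree

/-- The order on multilabeled trees: `t ≤ t'` iff `t` is obtained from `t'` by
contracting edges and merging the corresponding blocks: `t'.π` refines `t.π`
(`t'.π ≤ t.π` as setoids), two blocks of `t` are adjacent iff they are distinct and
contain adjacent blocks of `t'`, and each block of `t` is connected in `t'` (any two of
its elements are joined by a walk of `t'.G` whose support stays inside the block). -/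
def MLT.le {n : ℕ} (t t' : MLT n) : Prop :=
  t'.π ≤ t.π ∧
  (∀ x y : Fin n,
      t.G.Adj (Quotient.mk t.π x) (Quotient.mk t.π y) ↔
        (¬ t.π.r x y ∧ ∃ a b : Fin n, t.π.r a x ∧ t.π.r b y ∧
          t'.G.Adj (Quotient.mk t'.π a) (Quotient.mk t'.π b))) ∧
  (∀ x y : Fin n, t.π.r x y →
      ∃ w : t'.G.Walk (Quotient.mk t'.π x) (Quotient.mk t'.π y),
        ∀ q ∈ w.support, t.π.r q.out x)

/-!
An element with a block containing two labels `x ≠ y` lies strictly below the multilabeled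
tree obtained by splitting `x` off as a new leaf hanging at the rest of its block. A labeled
tree `m` is maximal: everything above it also has singleton blocks, and between such trees the
order just compares the underlying labeled graphs.

Below a labeled tree `m`, an element `t` is determined by the set of edges of `m` joining two
different blocks of `t`: its blocks are the components of `m` minus these edges and its tree is
the contraction of `m`. Conversely, contracting all edges outside a set `S` of edges of a tree
gives a tree whose surviving edges are exactly `S`, because every edge of a tree is a bridge.
Refinement of elements below `m` corresponds to inclusion of these edge sets.
-/

namespace SimpleGraph

open Function

variable {V W X : Type*} {G : SimpleGraph V}

theorem Walk.exists_walk_map_support (f : V → W) {x y : V} (w : G.Walk x y) :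
    ∃ w' : (G.map f).Walk (f x) (f y), ∀ q ∈ w'.support, ∃ v ∈ w.support, f v = q := by
  induction w with
  | nil => exact ⟨.nil, by simp⟩
  | @cons a b c h p ih =>
    obtain ⟨w', hw'⟩ := ih
    have lift : ∀ q ∈ w'.support, ∃ v ∈ (Walk.cons h p).support, f v = q := fun q hq => by
      obtain ⟨v, hv, rfl⟩ := hw' q hq
      exact ⟨v, List.mem_cons_of_mem _ hv, rfl⟩
    by_cases hab : f a = f b
    · exact ⟨w'.copy hab.symm rfl, by simpa using lift⟩
    · refine ⟨.cons (map_adj_apply' h hab) w', fun q hq => ?_⟩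
      rcases List.mem_cons.mp hq with rfl | hq
      · exact ⟨a, List.mem_cons_self, rfl⟩
      · exact lift q hq

theorem Reachable.map_fun (f : V → W) {x y : V} (h : G.Reachable x y) :
    (G.map f).Reachable (f x) (f y) :=
  h.elim fun w => (w.exists_walk_map_support f).elim fun w' _ => w'.reachable

theorem Connected.map_of_surjective {f : V → W} (hG : G.Connected) (hf : Surjective f) :
    (G.map f).Connected := by
  have := hG.nonempty.map f
  refine connected_iff _ |>.mpr ⟨fun u v => ?_, this⟩
  obtain ⟨x, rfl⟩ := hf u
  obtain ⟨y, rfl⟩ := hf v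
  exact (hG x y).map_fun f

theorem Reachable.of_map {f : V → W} (hf : ∀ a b, f a = f b → G.Reachable a b) {x y : V}
    (h : (G.map f).Reachable (f x) (f y)) : G.Reachable x y := by
  suffices ∀ u v, (G.map f).Reachable u v → ∀ x y, f x = u → f y = v → G.Reachable x y from
    this _ _ h x y rfl rfl
  rintro u v ⟨w⟩
  induction w with
  | nil => exact fun x y hx hy => hf x y (hx.trans hy.symm)
  | cons h _ ih =>
    rintro x y rfl rfl
    obtain ⟨-, a, b, hab, ha, rfl⟩ := h
    exact (hf x a ha.symm).trans (hab.reachable.trans (ih b y rfl rfl))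

theorem map_deleteEdges_le (f : V → W) (s : Set (Sym2 V)) :
    (G.map f).deleteEdges (Sym2.map f '' s) ≤ (G.deleteEdges s).map f := by
  rintro _ _ h
  rw [deleteEdges_adj] at h
  obtain ⟨⟨hne, a, b, hab, rfl, rfl⟩, hs⟩ := h
  exact ⟨hne, a, b, (deleteEdges_adj ..).mpr ⟨hab, fun h => hs ⟨_, h, Sym2.map_mk f a b⟩⟩,
    rfl, rfl⟩

theorem IsBridge.map {f : V → W} {a b : V} (h : G.IsBridge s(a, b))
    (hf : ∀ u v, f u = f v → (G.deleteEdges {s(a, b)}).Reachable u v) :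
    (G.map f).IsBridge s(f a, f b) := by
  rw [isBridge_iff] at h ⊢
  refine fun hr => h (Reachable.of_map hf (hr.mono ?_))
  simpa using map_deleteEdges_le (G := G) f {s(a, b)}

theorem IsAcyclic.map_of_injective {f : V → W} (hG : G.IsAcyclic) (hf : Injective f) :
    (G.map f).IsAcyclic := by
  rw [isAcyclic_iff_forall_adj_isBridge] at hG ⊢
  rintro _ _ ⟨-, a, b, hab, rfl, rfl⟩
  exact (hG hab).map fun u v huv => hf huv ▸ .rfl

theorem map_comap_comp {f : V → W} (hf : Surjective f) (H : SimpleGraph W) (g : W → X) :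
    (H.comap f).map (g ∘ f) = H.map g := by
  ext u v
  constructor
  · rintro ⟨hne, a, b, hab, rfl, rfl⟩
    exact ⟨hne, f a, f b, hab, rfl, rfl⟩
  · rintro ⟨hne, p, q, hpq, rfl, rfl⟩
    obtain ⟨a, rfl⟩ := hf p
    obtain ⟨b, rfl⟩ := hf q
    exact ⟨hne, a, b, hpq, rfl, rfl⟩

theorem eq_map_iff_comap_eq {f : V → W} (hf : Bijective f) (G' : SimpleGraph W) :
    G' = G.map f ↔ G'.comap f = G := by
  constructor
  · rintro rfl
    exact comap_map_eq ⟨f, hf.1⟩ G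
  · rintro rfl
    simpa using (map_comap_comp hf.2 G' id).symm

section Quotient

variable {σ τ : Setoid V}

theorem map_mk_adj_mk {x y : V} :
    (G.map (Quotient.mk σ)).Adj (Quotient.mk σ x) (Quotient.mk σ y) ↔
      ¬ σ x y ∧ ∃ a b, σ a x ∧ σ b y ∧ G.Adj a b := by
  simp only [map_adj', ne_eq, Quotient.eq]
  exact and_congr_right fun _ => ⟨fun ⟨a, b, hab, ha, hb⟩ => ⟨a, b, ha, hb, hab⟩,
    fun ⟨a, b, ha, hb, hab⟩ => ⟨a, b, hab, ha, hb⟩⟩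

theorem eq_map_mk_iff {K : SimpleGraph (Quotient σ)} :
    K = G.map (Quotient.mk σ) ↔ ∀ x y, K.Adj (Quotient.mk σ x) (Quotient.mk σ y) ↔
      ¬ σ x y ∧ ∃ a b, σ a x ∧ σ b y ∧ G.Adj a b := by
  simp only [← map_mk_adj_mk]
  refine ⟨fun h x y => h ▸ .rfl, fun h => ?_⟩
  ext u v
  induction u using Quotient.ind
  induction v using Quotient.ind
  exact h _ _

theorem map_comap_map_mk_of_le (h : σ ≤ τ) :
    ((G.map (Quotient.mk σ)).comap (Quotient.mk σ)).map (Quotient.mk τ) =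
      G.map (Quotient.mk τ) := by
  let factor : Quotient σ → Quotient τ :=
    Quotient.lift (Quotient.mk τ) fun _ _ hab => Quotient.sound (h hab)
  rw [show Quotient.mk τ = factor ∘ Quotient.mk σ from rfl,
    map_comap_comp Quotient.mk_surjective, map_map]

theorem reachableSetoid_le {H : SimpleGraph V} (h : ∀ a b, H.Adj a b → σ a b) :
    H.reachableSetoid ≤ σ := by
  rintro x y ⟨w⟩
  induction w with
  | nil => exact σ.refl _
  | cons hadj _ ih => exact σ.trans (h _ _ hadj) ih

end Quotient

section CutEdges

variable (G) in
def cutEdges (σ : Setoid V) : Set G.edgeSet :=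
  {e | (e : Sym2 V) ∉ Sym2.fromRel (r := σ) ⟨fun _ _ => σ.symm'⟩}

variable (G) in
def deleteEdgesSetoid (S : Set G.edgeSet) : Setoid V :=
  (G.deleteEdges (Subtype.val '' S)).reachableSetoid

variable {σ τ : Setoid V}

theorem mk_mem_cutEdges {a b : V} (h : G.Adj a b) :
    (⟨s(a, b), h⟩ : G.edgeSet) ∈ G.cutEdges σ ↔ ¬ σ a b := by
  simp [cutEdges]

theorem cutEdges_anti (h : σ ≤ τ) : G.cutEdges τ ⊆ G.cutEdges σ := by
  rintro ⟨e, he⟩ hτ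
  induction e using Sym2.ind
  exact (mk_mem_cutEdges he).mpr fun hσ => (mk_mem_cutEdges he).mp hτ (h hσ)

theorem deleteEdges_cutEdges_adj {a b : V} :
    (G.deleteEdges (Subtype.val '' G.cutEdges σ)).Adj a b ↔ G.Adj a b ∧ σ a b := by
  simp +contextual [cutEdges]

theorem deleteEdgesSetoid_anti {S S' : Set G.edgeSet} (h : S ⊆ S') :
    G.deleteEdgesSetoid S' ≤ G.deleteEdgesSetoid S :=
  fun _ _ hr => hr.mono (deleteEdges_anti (Set.image_mono h))

theorem deleteEdgesSetoid_cutEdges_le : G.deleteEdgesSetoid (G.cutEdges σ) ≤ σ :=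
  reachableSetoid_le fun _ _ h => (deleteEdges_cutEdges_adj.mp h).2

theorem Walk.deleteEdgesSetoid_cutEdges_of_support {x y z : V} (w : G.Walk x y)
    (hw : ∀ v ∈ w.support, σ v z) : G.deleteEdgesSetoid (G.cutEdges σ) x y := by
  induction w with
  | nil => exact Reachable.rfl
  | @cons a b c h p ih =>
    have hb : σ b z := hw b (List.mem_cons_of_mem _ p.start_mem_support)
    have hab : σ a b := σ.trans (hw a List.mem_cons_self) (σ.symm hb)
    exact (deleteEdges_cutEdges_adj.mpr ⟨h, hab⟩).reachable.trans
      (ih fun v hv => hw v (List.mem_cons_of_mem _ hv))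

/-- An edge of a forest is a bridge, so it joins two components of `G` minus `S` exactly when
it lies in `S`. -/
theorem IsAcyclic.cutEdges_deleteEdgesSetoid (hG : G.IsAcyclic) (S : Set G.edgeSet) :
    G.cutEdges (G.deleteEdgesSetoid S) = S := by
  ext ⟨e, he⟩
  induction e using Sym2.ind with | _ a b => ?_
  refine (mk_mem_cutEdges he).trans ⟨?_, ?_⟩
  · intro hnr
    by_contra hS
    exact hnr (Adj.reachable ((deleteEdges_adj ..).mpr ⟨he, by simpa using fun _ => hS⟩))
  · intro hS hr
    exact isAcyclic_iff_forall_adj_isBridge.mp hG he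
      (hr.mono (deleteEdges_anti (by simpa using ⟨he, hS⟩)))

theorem IsTree.map_mk_deleteEdgesSetoid (hG : G.IsTree) (S : Set G.edgeSet) :
    (G.map (Quotient.mk (G.deleteEdgesSetoid S))).IsTree := by
  refine ⟨hG.connected.map_of_surjective Quotient.mk_surjective, ?_⟩
  rw [isAcyclic_iff_forall_adj_isBridge]
  rintro _ _ ⟨hne, a, b, hab, rfl, rfl⟩
  have hS : (⟨s(a, b), hab⟩ : G.edgeSet) ∈ S := by
    rw [← hG.isAcyclic.cutEdges_deleteEdgesSetoid S]
    exact (mk_mem_cutEdges hab).mpr fun h => hne (Quotient.sound h)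
  refine (isAcyclic_iff_forall_adj_isBridge.mp hG.isAcyclic hab).map fun u v huv => ?_
  exact (Quotient.exact huv).mono (deleteEdges_anti (by simpa using ⟨hab, hS⟩))

end CutEdges

section AddLeaf

variable (G : SimpleGraph W) (w : W)

def addLeaf : SimpleGraph (Option W) := G.map some ⊔ edge none (some w)

variable {G} in
theorem IsTree.addLeaf (hG : G.IsTree) : (G.addLeaf w).IsTree := by
  refine ⟨(connected_iff_exists_forall_reachable _).mpr ⟨some w, ?_⟩, ?_⟩
  · rintro (_ | a)
    · exact ((edge_adj ..).mpr ⟨Or.inl ⟨rfl, rfl⟩, by simp⟩).reachable.symm.mono le_sup_right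
    · exact ((hG.connected w a).map_fun some).mono le_sup_left
  · refine IsAcyclic.sup_edge_of_not_reachable ?_
      (hG.isAcyclic.map_of_injective (Option.some_injective _))
    rintro ⟨p⟩
    cases p with
    | cons h _ =>
      obtain ⟨-, a, b, -, ha, -⟩ := h
      exact Option.some_ne_none a ha

theorem map_getD_addLeaf : (G.addLeaf w).map (·.getD w) = G := by
  ext u v
  constructor
  · rintro ⟨hne, p, q, hpq | hpq, rfl, rfl⟩
    · obtain ⟨-, a, b, hab, rfl, rfl⟩ := hpq
      exact hab
    · obtain ⟨⟨rfl, rfl⟩ | ⟨rfl, rfl⟩, -⟩ := (edge_adj ..).mp hpq <;> exact absurd rfl hne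
  · intro h
    exact ⟨h.ne, some u, some v, Or.inl ⟨by simpa using h.ne, u, v, h, rfl, rfl⟩, rfl, rfl⟩

end AddLeaf

end SimpleGraph

namespace MLT

open SimpleGraph Function

variable {n : ℕ}

def graph (t : MLT n) : SimpleGraph (Fin n) := t.G.comap (Quotient.mk t.π)

theorem G_eq_map_of_le {t t' : MLT n} (h : MLT.le t t') :
    t.G = t'.graph.map (Quotient.mk t.π) :=
  eq_map_mk_iff.mpr h.2.1

theorem eq_of_le_of_π_eq {t₁ t₂ m : MLT n} (h₁ : MLT.le t₁ m) (h₂ : MLT.le t₂ m)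
    (hπ : t₁.π = t₂.π) : t₁ = t₂ := by
  obtain ⟨π, G₁, _⟩ := t₁
  obtain ⟨_, G₂, _⟩ := t₂
  subst hπ
  obtain rfl : G₁ = G₂ := (G_eq_map_of_le h₁).trans (G_eq_map_of_le h₂).symm
  rfl

section Bot

variable {m : MLT n}

theorem mk_injective (hm : m.π = ⊥) : Injective (Quotient.mk m.π) := fun a b h => by
  have hab : m.π a b := Quotient.exact h
  rwa [hm, Setoid.bot_def] at hab

theorem mk_bijective (hm : m.π = ⊥) : Bijective (Quotient.mk m.π) :=
  ⟨mk_injective hm, Quotient.mk_surjective⟩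

theorem out_mk (hm : m.π = ⊥) (x : Fin n) : (Quotient.mk m.π x).out = x :=
  mk_injective hm (Quotient.out_eq _)

noncomputable def graphIso (hm : m.π = ⊥) : m.graph ≃g m.G :=
  Iso.comap (Equiv.ofBijective _ (mk_bijective hm)) m.G

theorem isTree_graph (hm : m.π = ⊥) : m.graph.IsTree :=
  (graphIso hm).isTree_iff.mpr m.tree

theorem le_iff_graph_eq_of_bot {s : MLT n} (hs : s.π = ⊥) (hm : m.π = ⊥) :
    MLT.le s m ↔ s.graph = m.graph := by
  refine ⟨fun h => (eq_map_iff_comap_eq (mk_bijective hs) _).mp (G_eq_map_of_le h), fun h =>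
    ⟨hs ▸ hm ▸ le_rfl, eq_map_mk_iff.mp ((eq_map_iff_comap_eq (mk_bijective hs) _).mpr h),
      fun x y hxy => ?_⟩⟩
  obtain rfl : x = y := by rwa [hs, Setoid.bot_def] at hxy
  refine ⟨.nil, fun q hq => ?_⟩
  rw [Walk.support_nil, List.mem_singleton] at hq
  rw [hq, out_mk hm]

theorem le_of_bot_of_le {t : MLT n} (hm : m.π = ⊥) (h : MLT.le m t) : MLT.le t m := by
  have ht : t.π = ⊥ := le_bot_iff.mp (hm ▸ h.1)
  rw [le_iff_graph_eq_of_bot hm ht] at h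
  exact (le_iff_graph_eq_of_bot ht hm).mpr h.symm

theorem card_edgeSet (hm : m.π = ⊥) : Nat.card m.G.edgeSet = n - 1 := by
  have h := (isTree_iff_connected_and_card.mp m.tree).2
  rw [← Nat.card_congr (Equiv.ofBijective _ (mk_bijective hm)), Nat.card_fin] at h
  omega

theorem exists_graph_walk_of_le {t : MLT n} (hm : m.π = ⊥) (h : MLT.le t m) {x y : Fin n}
    (hxy : t.π x y) : ∃ w : m.graph.Walk x y, ∀ v ∈ w.support, t.π v x := by
  obtain ⟨w, hw⟩ := h.2.2 x y hxy
  let out : m.G →g m.graph := ⟨Quotient.out, fun h => by simpa [graph] using h⟩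
  refine ⟨(w.map out).copy (out_mk hm x) (out_mk hm y), fun v hv => ?_⟩
  simp only [Walk.support_copy, Walk.support_map, List.mem_map] at hv
  obtain ⟨q, hq, rfl⟩ := hv
  exact hw q hq

theorem π_eq_deleteEdgesSetoid_cutEdges {t : MLT n} (hm : m.π = ⊥) (h : MLT.le t m) :
    t.π = m.graph.deleteEdgesSetoid (m.graph.cutEdges t.π) := by
  refine le_antisymm (fun x y hxy => ?_) deleteEdgesSetoid_cutEdges_le
  obtain ⟨w, hw⟩ := exists_graph_walk_of_le hm h hxy
  exact w.deleteEdgesSetoid_cutEdges_of_support hw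

/-- `S` is the set of edges that survive; all other edges of `m` are contracted. -/
noncomputable def ofEdges (hm : m.π = ⊥) (S : Set m.graph.edgeSet) : MLT n :=
  ⟨m.graph.deleteEdgesSetoid S, m.graph.map (Quotient.mk _),
    (isTree_graph hm).map_mk_deleteEdgesSetoid S⟩

theorem ofEdges_le (hm : m.π = ⊥) (S : Set m.graph.edgeSet) : MLT.le (ofEdges hm S) m := by
  refine ⟨hm ▸ bot_le, eq_map_mk_iff.mp rfl, fun x y ⟨w⟩ => ?_⟩
  let f : m.graph.deleteEdges (Subtype.val '' S) →g m.G := ⟨Quotient.mk m.π, fun h => h.1⟩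
  refine ⟨w.map f, fun q hq => ?_⟩
  rw [Walk.support_map, List.mem_map] at hq
  obtain ⟨v, hv, rfl⟩ := hq
  rw [show (f v).out = v from out_mk hm v]
  exact (w.takeUntil v hv).reachable.symm

theorem cutEdges_ofEdges (hm : m.π = ⊥) (S : Set m.graph.edgeSet) :
    m.graph.cutEdges (ofEdges hm S).π = S :=
  (isTree_graph hm).isAcyclic.cutEdges_deleteEdgesSetoid S

theorem le_iff_cutEdges_subset {a b : MLT n} (hm : m.π = ⊥) (ha : MLT.le a m)
    (hb : MLT.le b m) : MLT.le a b ↔ m.graph.cutEdges a.π ⊆ m.graph.cutEdges b.π := by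
  refine ⟨fun h => cutEdges_anti h.1, fun hsub => ?_⟩
  have hba : b.π ≤ a.π := by
    rw [π_eq_deleteEdgesSetoid_cutEdges hm ha, π_eq_deleteEdgesSetoid_cutEdges hm hb]
    exact deleteEdgesSetoid_anti hsub
  refine ⟨hba, (eq_map_mk_iff (G := b.graph)).mp ?_, fun x y hxy => ?_⟩
  · change _ = (b.G.comap _).map _
    rw [G_eq_map_of_le ha, G_eq_map_of_le hb, map_comap_map_mk_of_le hba]
  · obtain ⟨w, hw⟩ := exists_graph_walk_of_le hm ha hxy
    obtain ⟨w', hw'⟩ := w.exists_walk_map_support (Quotient.mk b.π)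
    rw [G_eq_map_of_le hb]
    refine ⟨w', fun q hq => ?_⟩
    obtain ⟨v, hv, rfl⟩ := hw' q hq
    exact a.π.trans (hba (Quotient.mk_out v)) (hw v hv)

theorem bijective_cutEdges (hm : m.π = ⊥) :
    Bijective fun t : {t // MLT.le t m} => m.graph.cutEdges t.1.π := by
  refine ⟨fun a b h => Subtype.ext (eq_of_le_of_π_eq a.2 b.2 ?_), fun S =>
    ⟨⟨ofEdges hm S, ofEdges_le hm S⟩, cutEdges_ofEdges hm S⟩⟩
  rw [π_eq_deleteEdgesSetoid_cutEdges hm a.2, π_eq_deleteEdgesSetoid_cutEdges hm b.2]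
  exact congrArg _ h

end Bot

section SplitOff

variable (m : MLT n) (x : Fin n)

def splitLabel (a : Fin n) : Option (Quotient m.π) :=
  if a = x then none else some (Quotient.mk m.π a)

variable {m x} {y : Fin n}

theorem splitLabel_surjective (hxy : m.π x y) (hne : x ≠ y) : Surjective (m.splitLabel x) := by
  rintro (_ | q)
  · exact ⟨x, if_pos rfl⟩
  · by_cases hq : q.out = x
    · refine ⟨y, ?_⟩
      rw [splitLabel, if_neg hne.symm, ← Quotient.out_eq q, hq]
      exact congrArg some (Quotient.sound (m.π.symm hxy))
    · exact ⟨q.out, by rw [splitLabel, if_neg hq, Quotient.out_eq]⟩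

theorem ker_splitLabel_le : Setoid.ker (m.splitLabel x) ≤ m.π := by
  intro a b hab
  rw [Setoid.ker_def, splitLabel, splitLabel] at hab
  split_ifs at hab with ha hb hb
  · exact ha ▸ hb ▸ m.π.refl x
  · exact Quotient.exact (Option.some_injective _ hab)

/-- `m` with `x` split off its block as a new leaf attached to the rest of the block. -/
noncomputable def splitOff (hxy : m.π x y) (hne : x ≠ y) : MLT n where
  π := Setoid.ker (m.splitLabel x)
  G := (m.G.addLeaf (Quotient.mk m.π x)).comap
    (Setoid.quotientKerEquivOfSurjective _ (splitLabel_surjective hxy hne))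
  tree := (Iso.comap _ _).isTree_iff.mpr (m.tree.addLeaf _)

theorem le_splitOff (hxy : m.π x y) (hne : x ≠ y) : MLT.le m (splitOff hxy hne) := by
  set t := splitOff hxy hne
  have hout : ∀ a b, m.π a b → m.π (Quotient.mk t.π a).out b :=
    fun a b hab => m.π.trans (ker_splitLabel_le (Quotient.mk_out a)) hab
  refine ⟨ker_splitLabel_le, (eq_map_mk_iff (G := t.graph)).mp ?_, fun a b hab => ?_⟩
  · have hmk : Quotient.mk m.π = (·.getD (Quotient.mk m.π x)) ∘ m.splitLabel x := by
      funext a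
      by_cases ha : a = x <;> simp [splitLabel, ha]
    refine (map_getD_addLeaf m.G (Quotient.mk m.π x)).symm.trans ?_
    rw [← map_comap_comp (splitLabel_surjective hxy hne), ← hmk]
    rfl
  by_cases hf : m.splitLabel x a = m.splitLabel x b
  · refine ⟨Walk.nil.copy rfl (Quotient.sound hf), fun q hq => ?_⟩
    rw [Walk.support_copy, Walk.support_nil, List.mem_singleton] at hq
    exact hq ▸ hout a a (m.π.refl a)
  · have hadj : t.G.Adj (Quotient.mk t.π a) (Quotient.mk t.π b) := by
      change (m.G.addLeaf (Quotient.mk m.π x)).Adj (m.splitLabel x a) (m.splitLabel x b)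
      refine Or.inr ((edge_adj ..).mpr ⟨?_, hf⟩)
      rw [splitLabel, splitLabel] at hf ⊢
      split_ifs at hf ⊢ with ha hb hb
      · exact absurd rfl hf
      · exact Or.inl ⟨rfl, congrArg some (Quotient.sound (m.π.symm (ha ▸ hab)))⟩
      · exact Or.inr ⟨congrArg some (Quotient.sound (hb ▸ hab)), rfl⟩
      · exact absurd (congrArg some (Quotient.sound hab)) hf
    refine ⟨.cons hadj .nil, fun q hq => ?_⟩
    rcases List.mem_cons.mp hq with rfl | hq
    · exact hout a a (m.π.refl a)
    · rw [List.mem_singleton.mp hq]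
      exact hout b a (m.π.symm hab)

theorem not_splitOff_le (hxy : m.π x y) (hne : x ≠ y) : ¬ MLT.le (splitOff hxy hne) m := by
  intro h
  have := Setoid.ker_def.mp (h.1 hxy)
  simp [splitLabel, hne.symm] at this

end SplitOff

theorem exists_le_not_le_of_ne_bot {m : MLT n} (hm : m.π ≠ ⊥) :
    ∃ t, MLT.le m t ∧ ¬ MLT.le t m := by
  obtain ⟨x, y, hxy, hne⟩ : ∃ x y, m.π x y ∧ x ≠ y := by
    by_contra! h
    exact hm (le_bot_iff.mp fun a b hab => by rw [Setoid.bot_def]; exact h a b hab)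
  exact ⟨_, le_splitOff hxy hne, not_splitOff_le hxy hne⟩

end MLT

theorem stmt_19_general (n : ℕ) :
    (∀ m : MLT n, (∀ t : MLT n, MLT.le m t → MLT.le t m) ↔ m.π = ⊥) ∧
    (∀ m : MLT n, m.π = ⊥ →
      Nat.card m.G.edgeSet = n - 1 ∧
      ∃ e : {t : MLT n // MLT.le t m} ≃ Set m.G.edgeSet,
        ∀ a b : {t : MLT n // MLT.le t m},
          MLT.le a.val b.val ↔ e a ⊆ e b) := by
  refine ⟨fun m => ⟨fun hmax => ?_, fun hm t => MLT.le_of_bot_of_le hm⟩,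
    fun m hm => ⟨MLT.card_edgeSet hm, ?_⟩⟩
  · by_contra hm
    obtain ⟨t, hmt, htm⟩ := MLT.exists_le_not_le_of_ne_bot hm
    exact htm (hmax t hmt)
  · refine ⟨(Equiv.ofBijective _ (MLT.bijective_cutEdges hm)).trans
      (Equiv.Set.congr (MLT.graphIso hm).mapEdgeSet), fun a b => ?_⟩
    rw [Equiv.trans_apply, Equiv.trans_apply, Equiv.Set.congr_apply, Equiv.Set.congr_apply,
      Set.image_subset_image_iff (Equiv.injective _), MLT.le_iff_cutEdges_subset hm a.2 b.2]
    rfl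

/-- the maximal elements of the poset `MLT(n)` of multilabeled trees on
`{1,…,n}` are exactly those with all blocks singletons (`π = ⊥`), i.e. the labeled trees
on `{1,…,n}`; and for each such maximal element `m`, the maximal interval below `m`
(which is all of `{t // t ≤ m}`, since the one-block tree is the least element) is
isomorphic as a poset to the Boolean lattice of subsets of the edge set `E(m)` of the
corresponding labeled tree, which has `n − 1` elements. -/
theorem stmt_19 (n : ℕ) (hn : 1 ≤ n) :
    (∀ m : MLT n, (∀ t : MLT n, MLT.le m t → MLT.le t m) ↔ m.π = ⊥) ∧
    (∀ m : MLT n, m.π = ⊥ →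
      Nat.card m.G.edgeSet = n - 1 ∧
      ∃ e : {t : MLT n // MLT.le t m} ≃ Set m.G.edgeSet,
        ∀ a b : {t : MLT n // MLT.le t m},
          MLT.le a.val b.val ↔ e a ⊆ e b) :=
  stmt_19_general n
end
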